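/- (2-approximation inequality for half-rounding.) Let f : 2^V → ℝ≥0 be non-negative submodular with f(∅) = 0, and x a fractional allocation with Σ_{i=1}^k x(v,i) = 1, x ≥ 0. Then ∫_{1/2}^1 f(U(θ)) dθ ≤ Σ_{i=1}^k ∫_0^{1/2} f(A(i,θ)) dθ, where A(i,θ) = {v : x(v,i) ≥ θ} and U(θ) = V \ ∪_i A(i,θ). Consequently, Σ_{i=1}^{k} 2∫_{1/2}^1 f(A(i,θ)) dθ + 2∫_{1/2}^1 f(U(θ)) dθ ≤ 2 Σ_{i=1}^k ∫_0^1 f(A(i,θ)) dθ. -/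

import Mathlib

/-!
For `y : V → [0,1]`, the superlevel integral `∫₀¹ f {t ≤ y}` is the Lovász extension of `f`.
Ranking `V` by `y`, it equals `∑ y v * w v` for the marginal weights `w` of `f` along the chain
of tails, and submodularity makes `∑_{v ∈ T} w v ≤ f T` for every `T`; hence the extension is
subadditive.

Let `M_j` be the running maximum of the first `j` coordinates of `x`, so `U(θ) = {M_k < θ}` for
`θ > 0`. The vectors `c_j = x_j ⊓ M_j` sum to `1 - M_k` and are bounded by `1/2`, since two
distinct coordinates sum to at most `1`. After the reflection `θ ↦ 1 - θ`, subadditivity bounds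
`∫_{1/2}^1 f(U(θ))` by `∑_j ∫_0^{1/2} f {θ ≤ c_j}`, and the lattice inequality
`f {θ ≤ a ⊓ b} + f {θ ≤ a ⊔ b} ≤ f {θ ≤ a} + f {θ ≤ b}` telescopes along the running maximum to
bound this by `∑_j ∫_0^{1/2} f(A(j, θ))`.
-/

open MeasureTheory Set intervalIntegral

def Submodular {V : Type*} (f : Set V → ℝ) : Prop :=
  ∀ A B : Set V, f A + f B ≥ f (A ∩ B) + f (A ∪ B)

section Chain

variable {V : Type*} {n : ℕ}

def tailSet (r : V ≃ Fin n) (j : ℕ) : Set V := {v | j ≤ r v}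

theorem mem_tailSet {r : V ≃ Fin n} {j : ℕ} {v : V} : v ∈ tailSet r j ↔ j ≤ r v := Iff.rfl

theorem tailSet_zero (r : V ≃ Fin n) : tailSet r 0 = univ := by
  ext v; simp [mem_tailSet]

theorem tailSet_of_le (r : V ≃ Fin n) {j : ℕ} (hj : n ≤ j) : tailSet r j = ∅ := by
  ext v; simpa [mem_tailSet] using (r v).isLt.trans_le hj

theorem tailSet_self (r : V ≃ Fin n) (v : V) :
    tailSet r (r v) = insert v (tailSet r (r v + 1)) := by
  ext u
  rw [mem_insert_iff, mem_tailSet, mem_tailSet, ← r.apply_eq_iff_eq, Fin.ext_iff]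
  omega

theorem inter_tailSet_self_of_notMem (r : V ≃ Fin n) {T : Set V} {v : V} (hv : v ∉ T) :
    T ∩ tailSet r (r v) = T ∩ tailSet r (r v + 1) := by
  rw [tailSet_self, inter_insert_of_notMem hv]

theorem eq_sum_inter_tailSet [Fintype V] {f : Set V → ℝ} (hempty : f ∅ = 0) (r : V ≃ Fin n)
    (T : Set V) :
    f T = ∑ v, (f (T ∩ tailSet r (r v)) - f (T ∩ tailSet r (r v + 1))) := by
  rw [Equiv.sum_comp r (fun l : Fin n => f (T ∩ tailSet r l) - f (T ∩ tailSet r (l + 1))),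
    Fin.sum_univ_eq_sum_range (fun l => f (T ∩ tailSet r l) - f (T ∩ tailSet r (l + 1))),
    Finset.sum_range_sub', tailSet_zero, tailSet_of_le r le_rfl]
  simp [hempty]

def greedyWeight (f : Set V → ℝ) (r : V ≃ Fin n) (v : V) : ℝ :=
  f (tailSet r (r v)) - f (tailSet r (r v + 1))

theorem sum_indicator_greedyWeight [Fintype V] {f : Set V → ℝ} (hempty : f ∅ = 0)
    (r : V ≃ Fin n) {T : Set V} (hT : ∀ u v, r u ≤ r v → u ∈ T → v ∈ T) :
    ∑ v, T.indicator (greedyWeight f r) v = f T := by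
  rw [eq_sum_inter_tailSet hempty r T]
  refine Finset.sum_congr rfl fun v _ => ?_
  by_cases hv : v ∈ T
  · have hsub : ∀ j : ℕ, r v ≤ j → T ∩ tailSet r j = tailSet r j := fun j hj =>
      inter_eq_right.2 fun u hu => hT v u (by simp [mem_tailSet] at hu ⊢; omega) hv
    rw [indicator_of_mem hv, hsub _ le_rfl, hsub _ (Nat.le_succ _), greedyWeight]
  · rw [indicator_of_notMem hv, inter_tailSet_self_of_notMem r hv, sub_self]

theorem Submodular.sum_indicator_greedyWeight_le [Fintype V] {f : Set V → ℝ}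
    (hf : Submodular f) (hempty : f ∅ = 0) (r : V ≃ Fin n) (T : Set V) :
    ∑ v, T.indicator (greedyWeight f r) v ≤ f T := by
  rw [eq_sum_inter_tailSet hempty r T]
  refine Finset.sum_le_sum fun v _ => ?_
  by_cases hv : v ∈ T
  · have hsucc : tailSet r (r v + 1) ⊆ tailSet r (r v) := by
      rw [tailSet_self]; exact subset_insert _ _
    have hinter : tailSet r (r v + 1) ∩ (T ∩ tailSet r (r v)) = T ∩ tailSet r (r v + 1) := by
      rw [inter_left_comm, inter_eq_left.2 hsucc]
    have hunion : tailSet r (r v + 1) ∪ (T ∩ tailSet r (r v)) = tailSet r (r v) := by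
      refine subset_antisymm (union_subset hsucc inter_subset_right) ?_
      rw [tailSet_self]
      exact insert_subset (Or.inr ⟨hv, mem_insert _ _⟩) subset_union_left
    have := hf (tailSet r (r v + 1)) (T ∩ tailSet r (r v))
    rw [hinter, hunion] at this
    rw [indicator_of_mem hv, greedyWeight]
    linarith
  · rw [indicator_of_notMem hv, inter_tailSet_self_of_notMem r hv, sub_self]

end Chain

section Lovasz

variable {V : Type*} [Fintype V] {f : Set V → ℝ}

theorem exists_rank_monotone (y : V → ℝ) :
    ∃ r : V ≃ Fin (Fintype.card V), ∀ u v, r u ≤ r v → y u ≤ y v := by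
  let e : Fin (Fintype.card V) ≃ V := (Fintype.equivFin V).symm
  refine ⟨((Tuple.sort (y ∘ e)).trans e).symm, fun u v h => ?_⟩
  simpa using Tuple.monotone_sort (y ∘ e) h

theorem superlevel_eq_sum {n : ℕ} (hempty : f ∅ = 0) {r : V ≃ Fin n} {y : V → ℝ}
    (hr : ∀ u v, r u ≤ r v → y u ≤ y v) (t : ℝ) :
    f {v | t ≤ y v} = ∑ v, if t ≤ y v then greedyWeight f r v else 0 := by
  rw [← sum_indicator_greedyWeight hempty r (T := {v | t ≤ y v})
    fun u v huv hu => hu.trans (hr u v huv)]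
  simp only [indicator_apply, mem_ofPred_eq]

theorem Submodular.sum_le_superlevel {n : ℕ} (hf : Submodular f) (hempty : f ∅ = 0)
    (r : V ≃ Fin n) (z : V → ℝ) (t : ℝ) :
    ∑ v, (if t ≤ z v then greedyWeight f r v else 0) ≤ f {v | t ≤ z v} := by
  convert hf.sum_indicator_greedyWeight_le hempty r {v | t ≤ z v}
  simp only [indicator_apply, mem_ofPred_eq]

theorem IntervalIntegrable.fun_sum {ι : Type*} (s : Finset ι) {g : ι → ℝ → ℝ} {a b : ℝ}
    (h : ∀ i ∈ s, IntervalIntegrable (g i) volume a b) :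
    IntervalIntegrable (fun t => ∑ i ∈ s, g i t) volume a b := by
  simpa only [Finset.sum_fn] using IntervalIntegrable.sum s h

theorem intervalIntegrable_ite_le (c a t₀ t₁ : ℝ) :
    IntervalIntegrable (fun t => if t ≤ c then a else 0) volume t₀ t₁ := by
  rw [intervalIntegrable_iff]
  exact (integrableOn_const (by simp)).indicator (t := Iic c) measurableSet_Iic

theorem integral_ite_le (a : ℝ) {c : ℝ} (hc₀ : 0 ≤ c) (hc₁ : c ≤ 1) :
    ∫ t in (0 : ℝ)..1, (if t ≤ c then a else 0) = c * a := by
  have := integral_indicator (f := fun _ => a) (μ := volume) (mem_Icc.2 ⟨hc₀, hc₁⟩)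
  simp only [indicator_apply, mem_ofPred_eq] at this
  simp [this]

theorem intervalIntegrable_superlevel (hempty : f ∅ = 0) (y : V → ℝ) (t₀ t₁ : ℝ) :
    IntervalIntegrable (fun t => f {v | t ≤ y v}) volume t₀ t₁ := by
  obtain ⟨r, hr⟩ := exists_rank_monotone y
  simp_rw [superlevel_eq_sum hempty hr]
  exact IntervalIntegrable.fun_sum _ fun v _ => intervalIntegrable_ite_le _ _ _ _

theorem integral_sum_ite_le (w z : V → ℝ) (hz₀ : ∀ v, 0 ≤ z v) (hz₁ : ∀ v, z v ≤ 1) :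
    ∫ t in (0 : ℝ)..1, ∑ v, (if t ≤ z v then w v else 0) = ∑ v, z v * w v := by
  rw [integral_finsetSum fun v _ => intervalIntegrable_ite_le _ _ _ _]
  exact Finset.sum_congr rfl fun v _ => integral_ite_le _ (hz₀ v) (hz₁ v)

theorem integral_superlevel_eq_sum_mul {n : ℕ} (hempty : f ∅ = 0) {r : V ≃ Fin n} {y : V → ℝ}
    (hr : ∀ u v, r u ≤ r v → y u ≤ y v) (hy₀ : ∀ v, 0 ≤ y v) (hy₁ : ∀ v, y v ≤ 1) :
    ∫ t in (0 : ℝ)..1, f {v | t ≤ y v} = ∑ v, y v * greedyWeight f r v := by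
  simp_rw [superlevel_eq_sum hempty hr]
  exact integral_sum_ite_le _ _ hy₀ hy₁

theorem Submodular.sum_mul_le_integral_superlevel {n : ℕ} (hf : Submodular f)
    (hempty : f ∅ = 0) (r : V ≃ Fin n) {z : V → ℝ} (hz₀ : ∀ v, 0 ≤ z v) (hz₁ : ∀ v, z v ≤ 1) :
    ∑ v, z v * greedyWeight f r v ≤ ∫ t in (0 : ℝ)..1, f {v | t ≤ z v} := by
  rw [← integral_sum_ite_le _ _ hz₀ hz₁]
  exact integral_mono_on zero_le_one
    (IntervalIntegrable.fun_sum _ fun v _ => intervalIntegrable_ite_le _ _ _ _)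
    (intervalIntegrable_superlevel hempty z 0 1) fun t _ => hf.sum_le_superlevel hempty r z t

theorem Submodular.integral_superlevel_sum_le (hf : Submodular f) (hempty : f ∅ = 0)
    {ι : Type*} (s : Finset ι) {c : ι → V → ℝ} (hc₀ : ∀ i ∈ s, ∀ v, 0 ≤ c i v)
    (hc₁ : ∀ v, ∑ i ∈ s, c i v ≤ 1) :
    ∫ t in (0 : ℝ)..1, f {v | t ≤ ∑ i ∈ s, c i v} ≤
      ∑ i ∈ s, ∫ t in (0 : ℝ)..1, f {v | t ≤ c i v} := by
  obtain ⟨r, hr⟩ := exists_rank_monotone fun v => ∑ i ∈ s, c i v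
  have hci₁ : ∀ i ∈ s, ∀ v, c i v ≤ 1 := fun i hi v =>
    (Finset.single_le_sum (fun j hj => hc₀ j hj v) hi).trans (hc₁ v)
  calc ∫ t in (0 : ℝ)..1, f {v | t ≤ ∑ i ∈ s, c i v}
      = ∑ i ∈ s, ∑ v, c i v * greedyWeight f r v := by
        rw [integral_superlevel_eq_sum_mul hempty hr
          (fun v => Finset.sum_nonneg fun i hi => hc₀ i hi v) hc₁, Finset.sum_comm]
        simp only [Finset.sum_mul]
    _ ≤ ∑ i ∈ s, ∫ t in (0 : ℝ)..1, f {v | t ≤ c i v} :=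
        Finset.sum_le_sum fun i hi =>
          hf.sum_mul_le_integral_superlevel hempty r (hc₀ i hi) (hci₁ i hi)

end Lovasz

section LevelSets

variable {V : Type*} [Fintype V] {f : Set V → ℝ}

theorem integral_superlevel_eq_of_le (hempty : f ∅ = 0) {y : V → ℝ} {a b c : ℝ}
    (hy : ∀ v, y v ≤ c) (hcb : c ≤ b) :
    ∫ t in a..b, f {v | t ≤ y v} = ∫ t in a..c, f {v | t ≤ y v} := by
  have hzero : ∫ t in c..b, f {v | t ≤ y v} = 0 := by
    refine integral_zero_ae (Filter.Eventually.of_forall fun t ht => ?_)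
    rw [uIoc_of_le hcb] at ht
    have hempty_set : {v | t ≤ y v} = ∅ :=
      eq_empty_of_forall_notMem fun v hv => (hv.trans (hy v)).not_gt ht.1
    rw [hempty_set, hempty]
  rw [← integral_add_adjacent_intervals (intervalIntegrable_superlevel hempty y a c)
    (intervalIntegrable_superlevel hempty y c b), hzero, add_zero]

theorem integral_sublevel_eq (y : V → ℝ) (a b d : ℝ) :
    ∫ θ in a..b, f {v | y v < θ} = ∫ s in (d - b)..(d - a), f {v | s ≤ d - y v} := by
  have hreflect := integral_comp_sub_left (fun θ => f {v | y v < θ}) d (a := d - b) (b := d - a)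
  rw [sub_sub_cancel, sub_sub_cancel] at hreflect
  rw [← hreflect]
  refine integral_congr_ae ?_
  filter_upwards [(finite_range fun v => d - y v).countable.ae_notMem volume] with s hs _
  congr 1
  ext v
  have hne : s ≠ d - y v := fun h => hs ⟨v, h.symm⟩
  simp only [mem_ofPred_eq]
  constructor
  · intro h
    linarith
  · intro h
    linarith [lt_of_le_of_ne h hne]

end LevelSets

section RunningMax

variable {V : Type*}

def runningMax (X : ℕ → V → ℝ) : ℕ → V → ℝ
  | 0 => 0
  | j + 1 => X j ⊔ runningMax X j

variable {X : ℕ → V → ℝ}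

theorem runningMax_nonneg (j : ℕ) (v : V) : 0 ≤ runningMax X j v := by
  induction j with
  | zero => rfl
  | succ j ih => exact ih.trans le_sup_right

theorem runningMax_le_sum (hX : ∀ j v, 0 ≤ X j v) (j : ℕ) (v : V) :
    runningMax X j v ≤ ∑ i ∈ Finset.range j, X i v := by
  induction j with
  | zero => rfl
  | succ j ih =>
    rw [Finset.sum_range_succ]
    exact sup_le (le_add_of_nonneg_left (Finset.sum_nonneg fun i _ => hX i v))
      (ih.trans (le_add_of_nonneg_right (hX j v)))

theorem runningMax_lt_iff {θ : ℝ} (hθ : 0 < θ) (j : ℕ) (v : V) :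
    runningMax X j v < θ ↔ ∀ i < j, X i v < θ := by
  induction j with
  | zero => simpa [runningMax] using hθ
  | succ j ih =>
    simp only [runningMax, Pi.sup_apply, sup_lt_iff, ih, Nat.lt_succ_iff_lt_or_eq, or_imp,
      forall_and, forall_eq, and_comm]

theorem sum_inf_runningMax (k : ℕ) (v : V) :
    ∑ j ∈ Finset.range k, (X j ⊓ runningMax X j) v =
      ∑ j ∈ Finset.range k, X j v - runningMax X k v := by
  induction k with
  | zero => simp [runningMax]
  | succ k ih =>
    rw [Finset.sum_range_succ, ih, Finset.sum_range_succ]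
    simp only [runningMax, Pi.inf_apply, Pi.sup_apply]
    linarith [min_add_max (X k v) (runningMax X k v)]

theorem inf_runningMax_le_half (hX : ∀ j v, 0 ≤ X j v) {k : ℕ}
    (hXsum : ∀ v, ∑ j ∈ Finset.range k, X j v = 1) {j : ℕ} (hj : j < k) (v : V) :
    (X j ⊓ runningMax X j) v ≤ 1 / 2 := by
  have hle : X j v + runningMax X j v ≤ 1 := calc
    X j v + runningMax X j v ≤ ∑ i ∈ Finset.range (j + 1), X i v := by
      linarith [Finset.sum_range_succ (X · v) j, runningMax_le_sum hX j v]
    _ ≤ ∑ i ∈ Finset.range k, X i v :=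
      Finset.sum_le_sum_of_subset_of_nonneg (Finset.range_subset_range.2 hj)
        fun i _ _ => hX i v
    _ = 1 := hXsum v
  simp only [Pi.inf_apply]
  linarith [min_le_left (X j v) (runningMax X j v), min_le_right (X j v) (runningMax X j v)]

end RunningMax

section Lattice

variable {V : Type*} {f : Set V → ℝ}

theorem Submodular.superlevel_inf_add_superlevel_sup_le (hf : Submodular f) (a b : V → ℝ) (t : ℝ) :
    f {v | t ≤ (a ⊓ b) v} + f {v | t ≤ (a ⊔ b) v} ≤ f {v | t ≤ a v} + f {v | t ≤ b v} := by
  have hinf : {v | t ≤ (a ⊓ b) v} = {v | t ≤ a v} ∩ {v | t ≤ b v} := by ext; simp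
  have hsup : {v | t ≤ (a ⊔ b) v} = {v | t ≤ a v} ∪ {v | t ≤ b v} := by ext; simp
  rw [hinf, hsup]
  exact hf _ _

theorem Submodular.sum_superlevel_inf_runningMax_le (hf : Submodular f) (hempty : f ∅ = 0)
    (X : ℕ → V → ℝ) {t : ℝ} (ht : 0 < t) (k : ℕ) :
    ∑ j ∈ Finset.range k, f {v | t ≤ (X j ⊓ runningMax X j) v} + f {v | t ≤ runningMax X k v}
      ≤ ∑ j ∈ Finset.range k, f {v | t ≤ X j v} := by
  induction k with
  | zero =>
    have hempty_set : {v | t ≤ runningMax X 0 v} = ∅ :=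
      eq_empty_of_forall_notMem fun v hv => ht.not_ge hv
    simp [hempty_set, hempty]
  | succ k ih =>
    have hlattice := hf.superlevel_inf_add_superlevel_sup_le (X k) (runningMax X k) t
    have hsucc : runningMax X (k + 1) = X k ⊔ runningMax X k := rfl
    rw [Finset.sum_range_succ, Finset.sum_range_succ, hsucc]
    linarith

end Lattice

section HalfRounding

variable {V : Type*} [Fintype V] {f : Set V → ℝ}

theorem Submodular.sum_integral_superlevel_inf_runningMax_le (hf : Submodular f)
    (hnonneg : ∀ S, 0 ≤ f S) (hempty : f ∅ = 0) (X : ℕ → V → ℝ) (k : ℕ) {b : ℝ} (hb : 0 ≤ b) :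
    ∑ j ∈ Finset.range k, ∫ t in (0 : ℝ)..b, f {v | t ≤ (X j ⊓ runningMax X j) v}
      ≤ ∑ j ∈ Finset.range k, ∫ t in (0 : ℝ)..b, f {v | t ≤ X j v} := by
  rw [← integral_finsetSum fun j _ => intervalIntegrable_superlevel hempty _ 0 b,
    ← integral_finsetSum fun j _ => intervalIntegrable_superlevel hempty _ 0 b]
  refine integral_mono_on_of_le_Ioo hb
    (IntervalIntegrable.fun_sum _ fun j _ => intervalIntegrable_superlevel hempty _ 0 b)
    (IntervalIntegrable.fun_sum _ fun j _ => intervalIntegrable_superlevel hempty _ 0 b)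
    fun t ht => ?_
  linarith [hf.sum_superlevel_inf_runningMax_le hempty X ht.1 k,
    hnonneg {v | t ≤ runningMax X k v}]

theorem Submodular.integral_forall_lt_le (hf : Submodular f) (hnonneg : ∀ S, 0 ≤ f S)
    (hempty : f ∅ = 0) {k : ℕ} {X : ℕ → V → ℝ} (hX : ∀ j v, 0 ≤ X j v)
    (hXsum : ∀ v, ∑ j ∈ Finset.range k, X j v = 1) :
    ∫ θ in (1 / 2 : ℝ)..1, f {v | ∀ j < k, X j v < θ} ≤
      ∑ j ∈ Finset.range k, ∫ θ in (0 : ℝ)..(1 / 2), f {v | θ ≤ X j v} := by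
  have hinf₀ : ∀ j ∈ Finset.range k, ∀ v, 0 ≤ (X j ⊓ runningMax X j) v := fun j _ v =>
    le_inf (hX j v) (runningMax_nonneg j v)
  have hinf_sum : ∀ v, ∑ j ∈ Finset.range k, (X j ⊓ runningMax X j) v = 1 - runningMax X k v :=
    fun v => by rw [sum_inf_runningMax, hXsum]
  calc ∫ θ in (1 / 2 : ℝ)..1, f {v | ∀ j < k, X j v < θ}
      = ∫ θ in (1 / 2 : ℝ)..1, f {v | runningMax X k v < θ} := by
        refine integral_congr fun θ hθ => ?_
        rw [uIcc_of_le (by norm_num)] at hθ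
        simp only [runningMax_lt_iff (lt_of_lt_of_le (by norm_num) hθ.1)]
    _ = ∫ t in (0 : ℝ)..(1 / 2), f {v | t ≤ 1 - runningMax X k v} := by
        rw [integral_sublevel_eq _ _ _ 1]
        norm_num
    _ ≤ ∫ t in (0 : ℝ)..1, f {v | t ≤ 1 - runningMax X k v} :=
        integral_mono_interval le_rfl (by norm_num) (by norm_num)
          (Filter.Eventually.of_forall fun _ => hnonneg _)
          (intervalIntegrable_superlevel hempty _ _ _)
    _ ≤ ∑ j ∈ Finset.range k, ∫ t in (0 : ℝ)..1, f {v | t ≤ (X j ⊓ runningMax X j) v} := by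
        simp_rw [← hinf_sum]
        exact hf.integral_superlevel_sum_le hempty _ hinf₀ fun v => by
          rw [hinf_sum]; linarith [runningMax_nonneg (X := X) k v]
    _ = ∑ j ∈ Finset.range k, ∫ t in (0 : ℝ)..(1 / 2), f {v | t ≤ (X j ⊓ runningMax X j) v} :=
        Finset.sum_congr rfl fun j hj => integral_superlevel_eq_of_le hempty
          (inf_runningMax_le_half hX hXsum (Finset.mem_range.1 hj)) (by norm_num)
    _ ≤ ∑ j ∈ Finset.range k, ∫ θ in (0 : ℝ)..(1 / 2), f {v | θ ≤ X j v} :=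
        hf.sum_integral_superlevel_inf_runningMax_le hnonneg hempty X k (by norm_num)

end HalfRounding

theorem half_rounding_two_approx {V : Type*} [Fintype V] {k : ℕ}
    (f : Set V → ℝ)
    (hsub : ∀ A B : Set V, f A + f B ≥ f (A ∩ B) + f (A ∪ B))
    (hnonneg : ∀ S : Set V, 0 ≤ f S) (hempty : f (∅ : Set V) = 0)
    (x : V → Fin k → ℝ)
    (hx0 : ∀ v i, 0 ≤ x v i) (hxsum : ∀ v, ∑ i, x v i = 1) :
    ((∫ θ in (1/2 : ℝ)..1, f {v : V | ∀ i : Fin k, x v i < θ}) ≤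
      ∑ i : Fin k, ∫ θ in (0:ℝ)..(1/2 : ℝ), f {v : V | θ ≤ x v i}) ∧
    ((∑ i : Fin k, 2 * ∫ θ in (1/2 : ℝ)..1, f {v : V | θ ≤ x v i})
        + 2 * (∫ θ in (1/2 : ℝ)..1, f {v : V | ∀ i : Fin k, x v i < θ}) ≤
      2 * ∑ i : Fin k, ∫ θ in (0:ℝ)..1, f {v : V | θ ≤ x v i}) := by
  set X : ℕ → V → ℝ := fun j v => if h : j < k then x v ⟨j, h⟩ else 0
  have hX : ∀ j v, 0 ≤ X j v := fun j v => by
    by_cases h : j < k <;> simp [X, h, hx0]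
  have hX_fin : ∀ (i : Fin k) v, X i v = x v i := fun i v => by simp [X]
  have hXsum : ∀ v, ∑ j ∈ Finset.range k, X j v = 1 := fun v => by
    rw [← Fin.sum_univ_eq_sum_range (X · v), ← hxsum v]
    simp only [hX_fin]
  have hU : ∀ θ, {v | ∀ i : Fin k, x v i < θ} = {v | ∀ j < k, X j v < θ} := fun θ => by
    ext v
    simp only [mem_ofPred_eq, Fin.forall_iff, ← hX_fin]
  have hhalf : (∫ θ in (1/2 : ℝ)..1, f {v : V | ∀ i : Fin k, x v i < θ}) ≤
      ∑ i : Fin k, ∫ θ in (0:ℝ)..(1/2 : ℝ), f {v : V | θ ≤ x v i} := by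
    simp_rw [hU, ← hX_fin]
    rw [Fin.sum_univ_eq_sum_range (fun j => ∫ θ in (0:ℝ)..(1/2 : ℝ), f {v | θ ≤ X j v})]
    exact Submodular.integral_forall_lt_le hsub hnonneg hempty hX hXsum
  have hsplit : ∀ i : Fin k, ∫ θ in (0:ℝ)..1, f {v : V | θ ≤ x v i} =
      (∫ θ in (0:ℝ)..(1/2), f {v : V | θ ≤ x v i}) + ∫ θ in (1/2 : ℝ)..1, f {v : V | θ ≤ x v i} :=
    fun i => (integral_add_adjacent_intervals (intervalIntegrable_superlevel hempty _ _ _)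
      (intervalIntegrable_superlevel hempty _ _ _)).symm
  refine ⟨hhalf, ?_⟩
  rw [← Finset.mul_sum, Finset.sum_congr rfl fun i _ => hsplit i, Finset.sum_add_distrib]
  linarith
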